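/- Soundness of Proof Rule #1 for quantitative reactivity: let S be a countable set with the discrete σ-algebra, P a Markov kernel on S, μ an initial probability measure on S, and (A₁,B₁),…,(A_k,B_k) subsets of S. Suppose there exist: a region I ⊆ S with a function V₀ : S → [0,∞); regions J₁,…,J_k with J_i ⊆ I \ A_i; functions V₁,W₁,…,V_k,W_k : S → [0,∞); and ranking functions U₁,…,U_k : S → ℕ, such that for every i = 1,…,k: (a) PV_i(s) ≤ V_i(s) for all s ∉ A_i; (b) V_i(s) ≥ 1 for all s ∈ A_i; (c) there exists γ_i > 0 with V_i(s) ≤ 1 − γ_i for all s ∈ J_i; (d) PW_i(s) ≤ W_i(s) for all s ∈ I \ (B_i ∪ J_i); (e) W_i(s) > 0 for all s ∈ I \ (B_i ∪ J_i); (f) W_i(s) = 0 and U_i(s) = 0 for all s ∈ I ∩ (B_i ∪ J_i); (g) for every r ≥ 0 there exists ε_r > 0 such that for all s ∈ I \ (B_i ∪ J_i) with W_i(s) ≤ r, P(s, {s' : U_i(s') < U_i(s)}) ≥ ε_r; (h) for every r ≥ 0, the image U_i[{s ∈ I : W_i(s) ≤ r}] is a bounded subset of ℕ; and moreover (i) PV₀(s)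 ≤ V₀(s) for all s ∈ I and (j) V₀(s) ≥ 1 for all s ∉ I. Then P_μ(⋂_{i=1}^k (Fin(A_i) ∪ Inf(B_i))) ≥ 1 − μV₀. -/

import Mathlib

open MeasureTheory ProbabilityTheory Filter Set ENNReal

/-- The one-step shift on trajectories: `shift ω n = ω (n+1)`. -/
def shift {S : Type*} (ω : ℕ → S) : ℕ → S := fun n => ω (n + 1)

/-- `Fin A`: the event of visiting `A` only finitely many times. -/
def finVisits {S : Type*} (A : Set S) : Set (ℕ → S) :=
  {ω | ∃ n, ∀ m, n ≤ m → ω m ∉ A}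

/-- `Inf B`: the event of visiting `B` infinitely many times. -/
def infVisits {S : Type*} (B : Set S) : Set (ℕ → S) :=
  {ω | ∀ n, ∃ m, n ≤ m ∧ ω m ∈ B}

/-- `{σ_A < ∞}`: the event that the first return time to `A` is finite,
where `σ_A = 1 + τ_A ∘ shift`; equivalently `∃ n, ω (n+1) ∈ A`. -/
def retEvent {S : Type*} (A : Set S) : Set (ℕ → S) := {ω | ∃ n, ω (n + 1) ∈ A}

/-- `I^ω`: the event of remaining in `I` forever. -/
def invEvent {S : Type*} (I : Set S) : Set (ℕ → S) := {ω | ∀ n, ω n ∈ I}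

/-- Prepend a state to a trajectory. -/
def consTraj {S : Type*} (s : S) (ω : ℕ → S) : ℕ → S
  | 0 => s
  | n + 1 => ω n

/-- `T` is the Ionescu–Tulcea trajectory kernel of the time-homogeneous Markov chain with
transition kernel `P`: `T s` is the law on `S^ℕ` (with the product σ-algebra) of the
coordinate Markov chain with kernel `P` started at `s`.  It is uniquely characterised
(by the Ionescu–Tulcea theorem) by the one-step Markov recursion below: the trajectory
from `s` is `s` followed by a trajectory started from a `P s`-distributed state.
The trajectory measure `P_ξ` with initial distribution `ξ` is then `ξ.bind (fun s => T s)`,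
and `P_{δ_s} = T s`. -/
def IsTrajKernel {S : Type*} [MeasurableSpace S] (P : Kernel S S)
    (T : Kernel S (ℕ → S)) : Prop :=
  ∀ s : S, (T s : Measure (ℕ → S)) =
    ((P s : Measure S).bind (fun u => (T u : Measure (ℕ → S)))).map (consTraj s)

section
set_option linter.unusedSectionVars false
set_option maxHeartbeats 800000
variable {S : Type*} [MeasurableSpace S] [DiscreteMeasurableSpace S] [Countable S]

lemma mS (C : Set S) : MeasurableSet C := MeasurableSet.of_discrete

lemma mfun (f : S → ℝ≥0∞) : Measurable f := measurable_of_countable f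

lemma measurable_consTraj (s : S) : Measurable (consTraj s : (ℕ → S) → (ℕ → S)) := by
  apply measurable_pi_lambda
  intro n
  cases n with
  | zero => exact measurable_const
  | succ k => exact measurable_pi_apply k

lemma mcoord (m : ℕ) (C : Set S) : MeasurableSet {ω : ℕ → S | ω m ∈ C} :=
  (measurable_pi_apply m) (mS C)

variable (P : Kernel S S) (T : Kernel S (ℕ → S)) [IsMarkovKernel P] [IsMarkovKernel T]

lemma T_step (hT : IsTrajKernel P T) (s : S) {E : Set (ℕ → S)} (hE : MeasurableSet E) :
    T s E = ∫⁻ u, T u (consTraj s ⁻¹' E) ∂(P s) := by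
  rw [hT s, Measure.map_apply (measurable_consTraj s) hE,
    Measure.bind_apply ((measurable_consTraj s) hE) T.measurable.aemeasurable]

lemma T_step_eq (hT : IsTrajKernel P T) (s : S) {E' E : Set (ℕ → S)}
    (hE' : MeasurableSet E') (h : consTraj s ⁻¹' E' = E) :
    T s E' = ∫⁻ v, T v E ∂(P s) := by
  rw [T_step P T hT s hE', h]

lemma T_coord0_one (hT : IsTrajKernel P T) {s : S} {C : Set S} (hs : s ∈ C) :
    T s {ω | ω 0 ∈ C} = 1 := by
  rw [T_step P T hT s (mcoord 0 C)]
  have : consTraj s ⁻¹' {ω : ℕ → S | ω 0 ∈ C} = univ := by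
    ext ω; simp [consTraj, hs]
  rw [this]
  simp [measure_univ]

lemma T_coord0_zero (hT : IsTrajKernel P T) {s : S} {C : Set S} {E : Set (ℕ → S)}
    (hsub : E ⊆ {ω | ω 0 ∈ C}) (hs : s ∉ C) : T s E = 0 := by
  refine measure_mono_null hsub ?_
  rw [T_step P T hT s (mcoord 0 C)]
  have : consTraj s ⁻¹' {ω : ℕ → S | ω 0 ∈ C} = ∅ := by
    ext ω; simp [consTraj, hs]
  rw [this]
  simp

/-! ### Part II events -/

/-- stay in `C` during the first `n` steps -/
def stayN (C : Set S) (n : ℕ) : Set (ℕ → S) := {ω | ∀ m ≤ n, ω m ∈ C}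

/-- stay in `C` from time `n₀` on -/
def tailEv (C : Set S) (n₀ : ℕ) : Set (ℕ → S) := {ω | ∀ m, n₀ ≤ m → ω m ∈ C}

/-- `W` exceeds `r` at some time `m ≤ n` while staying in `D` up to `m` -/
def exceedN (D : Set S) (W : S → ℝ) (r : ℝ) (n : ℕ) : Set (ℕ → S) :=
  {ω | ∃ m ≤ n, r < W (ω m) ∧ ∀ j ≤ m, ω j ∈ D}

/-- stay in `D` from `n₀` on with `W` unbounded along the tail -/
def unbEv (D : Set S) (W : S → ℝ) (n₀ : ℕ) : Set (ℕ → S) :=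
  tailEv D n₀ ∩ ⋂ r : ℕ, {ω | ∃ m, n₀ ≤ m ∧ (r : ℝ) < W (ω m)}

lemma mStay (C : Set S) (n : ℕ) : MeasurableSet (stayN C n) := by
  have : stayN C n = ⋂ m ≤ n, {ω : ℕ → S | ω m ∈ C} := by ext ω; simp [stayN]
  rw [this]
  exact MeasurableSet.biInter (to_countable _) fun m _ => mcoord m _

lemma mTail (C : Set S) (n₀ : ℕ) : MeasurableSet (tailEv C n₀) := by
  have : tailEv C n₀ = ⋂ m, ⋂ (_ : n₀ ≤ m), {ω : ℕ → S | ω m ∈ C} := by ext ω; simp [tailEv]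
  rw [this]
  exact MeasurableSet.iInter fun m => MeasurableSet.iInter fun _ => mcoord m _

lemma mExceed (D : Set S) (W : S → ℝ) (r : ℝ) (n : ℕ) : MeasurableSet (exceedN D W r n) := by
  have : exceedN D W r n = ⋃ m ≤ n,
      ({ω : ℕ → S | ω m ∈ {v | r < W v}} ∩ ⋂ j ≤ m, {ω : ℕ → S | ω j ∈ D}) := by
    ext ω; simp only [exceedN, mem_setOf_eq, mem_iUnion, mem_inter_iff, mem_iInter]; tauto
  rw [this]
  exact MeasurableSet.biUnion (to_countable _) fun m _ =>
    ((mcoord m _).inter (MeasurableSet.biInter (to_countable _) fun j _ => mcoord j _))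

lemma mUnb (D : Set S) (W : S → ℝ) (n₀ : ℕ) : MeasurableSet (unbEv D W n₀) := by
  refine (mTail D n₀).inter (MeasurableSet.iInter fun r => ?_)
  have : {ω : ℕ → S | ∃ m, n₀ ≤ m ∧ (r : ℝ) < W (ω m)} =
      ⋃ m, ⋃ (_ : n₀ ≤ m), {ω : ℕ → S | ω m ∈ {v | (r : ℝ) < W v}} := by ext ω; simp
  rw [this]
  exact MeasurableSet.iUnion fun m => MeasurableSet.iUnion fun _ => mcoord m _

lemma stayN_sub_coord0 (C : Set S) (n : ℕ) : stayN C n ⊆ {ω | ω 0 ∈ C} :=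
  fun ω hω => hω 0 (Nat.zero_le n)

lemma stayN_pre (s : S) (hs : s ∈ C) (n : ℕ) :
    consTraj s ⁻¹' stayN C (n + 1) = stayN C n := by
  ext ω
  constructor
  · intro h m hm
    exact h (m + 1) (by omega)
  · intro h m hm
    cases m with
    | zero => exact hs
    | succ m' => exact h m' (by omega)

lemma tailEv_pre (s : S) (C : Set S) (n : ℕ) :
    consTraj s ⁻¹' tailEv C (n + 1) = tailEv C n := by
  ext ω
  constructor
  · intro h m hm
    exact h (m + 1) (by omega)
  · intro h m hm
    cases m with
    | zero => omega
    | succ m' => exact h m' (by omega)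

/-! ### the supermartingale maximal bound -/

lemma exceed_bound (hT : IsTrajKernel P T) {D : Set S} {W : S → ℝ} {r : ℝ}
    (hdW : ∀ s ∈ D, ∫⁻ u, ENNReal.ofReal (W u) ∂(P s) ≤ ENNReal.ofReal (W s)) :
    ∀ n s, ENNReal.ofReal r * T s (exceedN D W r n) ≤ ENNReal.ofReal (W s) := by
  intro n
  induction n with
  | zero =>
    intro s
    by_cases hsD : s ∈ D
    · by_cases hsr : r < W s
      · calc ENNReal.ofReal r * T s (exceedN D W r 0) ≤ ENNReal.ofReal r * 1 := by
              exact mul_le_mul_right prob_le_one _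
          _ = ENNReal.ofReal r := mul_one _
          _ ≤ ENNReal.ofReal (W s) := ENNReal.ofReal_le_ofReal hsr.le
      · have hsub : exceedN D W r 0 ⊆ {ω : ℕ → S | ω 0 ∈ {v | r < W v}} := by
          rintro ω ⟨m, hm, h1, _⟩
          interval_cases m
          exact h1
        rw [T_coord0_zero P T hT hsub hsr]
        simp
    · have hsub : exceedN D W r 0 ⊆ {ω : ℕ → S | ω 0 ∈ D} := by
        rintro ω ⟨m, hm, _, h2⟩
        exact h2 0 (Nat.zero_le m)
      rw [T_coord0_zero P T hT hsub hsD]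
      simp
  | succ n ih =>
    intro s
    by_cases hsD : s ∈ D
    · by_cases hsr : r < W s
      · calc ENNReal.ofReal r * T s (exceedN D W r (n + 1)) ≤ ENNReal.ofReal r * 1 :=
              mul_le_mul_right prob_le_one _
          _ = ENNReal.ofReal r := mul_one _
          _ ≤ ENNReal.ofReal (W s) := ENNReal.ofReal_le_ofReal hsr.le
      · have hpre : consTraj s ⁻¹' exceedN D W r (n + 1) = exceedN D W r n := by
          ext ω
          constructor
          · rintro ⟨m, hm, h1, h2⟩
            cases m with
            | zero => exact absurd h1 hsr
            | succ m' =>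
              refine ⟨m', by omega, h1, fun j hj => h2 (j + 1) (by omega)⟩
          · rintro ⟨m, hm, h1, h2⟩
            refine ⟨m + 1, by omega, h1, fun j hj => ?_⟩
            cases j with
            | zero => exact hsD
            | succ j' => exact h2 j' (by omega)
        rw [T_step_eq P T hT s (mExceed D W r (n + 1)) hpre]
        rw [← lintegral_const_mul' _ _ ENNReal.ofReal_ne_top]
        calc ∫⁻ v, ENNReal.ofReal r * T v (exceedN D W r n) ∂(P s)
            ≤ ∫⁻ v, ENNReal.ofReal (W v) ∂(P s) := lintegral_mono fun v => ih v
          _ ≤ ENNReal.ofReal (W s) := hdW s hsD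
    · have hsub : exceedN D W r (n + 1) ⊆ {ω : ℕ → S | ω 0 ∈ D} := by
        rintro ω ⟨m, hm, _, h2⟩
        exact h2 0 (Nat.zero_le m)
      rw [T_coord0_zero P T hT hsub hsD]
      simp

lemma unb_zero (hT : IsTrajKernel P T) {D : Set S} {W : S → ℝ}
    (hdW : ∀ s ∈ D, ∫⁻ u, ENNReal.ofReal (W u) ∂(P s) ≤ ENNReal.ofReal (W s)) :
    ∀ n₀ s, T s (unbEv D W n₀) = 0 := by
  have base : ∀ s, T s (unbEv D W 0) = 0 := by
    intro s
    set x := T s (unbEv D W 0) with hx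
    by_contra hx0
    have hkey : ∀ r : ℕ, (r : ℝ≥0∞) * x ≤ ENNReal.ofReal (W s) := by
      intro r
      have hsub : unbEv D W 0 ⊆ ⋃ n, exceedN D W (r : ℝ) n := by
        rintro ω ⟨h1, h2⟩
        simp only [mem_iInter, mem_setOf_eq] at h2
        obtain ⟨m, _, hm⟩ := h2 r
        exact mem_iUnion.2 ⟨m, m, le_rfl, hm, fun j _ => h1 j (Nat.zero_le j)⟩
      have hmono : Monotone (exceedN D W (r : ℝ)) := by
        rintro n n' hnn ω ⟨m, hm, h⟩
        exact ⟨m, le_trans hm hnn, h⟩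
      have : x ≤ ⨆ n, T s (exceedN D W (r : ℝ) n) := by
        rw [← hmono.directed_le.measure_iUnion]
        exact measure_mono hsub
      calc (r : ℝ≥0∞) * x ≤ (r : ℝ≥0∞) * ⨆ n, T s (exceedN D W (r : ℝ) n) :=
            mul_le_mul_right this _
        _ = ⨆ n, (r : ℝ≥0∞) * T s (exceedN D W (r : ℝ) n) := ENNReal.mul_iSup _ _
        _ ≤ ENNReal.ofReal (W s) := by
            refine iSup_le fun n => ?_
            have := exceed_bound P T hT hdW (r := (r : ℝ)) n s
            rwa [ENNReal.ofReal_natCast] at this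
    have hxt : x ≠ ⊤ := (lt_of_le_of_lt prob_le_one one_lt_top).ne
    obtain ⟨r, hr⟩ := ENNReal.exists_nat_gt (ENNReal.div_lt_top ENNReal.ofReal_ne_top hx0).ne
    have : (r : ℝ≥0∞) ≤ ENNReal.ofReal (W s) / x :=
      (ENNReal.le_div_iff_mul_le (Or.inl hx0) (Or.inl hxt)).2 (hkey r)
    exact absurd (lt_of_le_of_lt this hr) (lt_irrefl _)
  intro n₀
  induction n₀ with
  | zero => exact base
  | succ n ih =>
    intro s
    have hpre : consTraj s ⁻¹' unbEv D W (n + 1) = unbEv D W n := by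
      ext ω
      simp only [unbEv, mem_inter_iff, mem_iInter, mem_preimage, mem_setOf_eq]
      constructor
      · rintro ⟨h1, h2⟩
        refine ⟨fun m hm => h1 (m + 1) (by omega), fun r => ?_⟩
        obtain ⟨m, hm, hr⟩ := h2 r
        cases m with
        | zero => omega
        | succ m' => exact ⟨m', by omega, hr⟩
      · rintro ⟨h1, h2⟩
        refine ⟨fun m hm => ?_, fun r => ?_⟩
        · cases m with
          | zero => omega
          | succ m' => exact h1 m' (by omega)
        · obtain ⟨m, hm, hr⟩ := h2 r
          exact ⟨m + 1, by omega, hr⟩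
    rw [T_step_eq P T hT s (mUnb D W (n + 1)) hpre]
    simp [ih]

end
section
set_option linter.unusedSectionVars false
set_option maxHeartbeats 1000000
variable {S : Type*} [MeasurableSpace S] [DiscreteMeasurableSpace S] [Countable S]
variable (P : Kernel S S) (T : Kernel S (ℕ → S)) [IsMarkovKernel P] [IsMarkovKernel T]

/-! ### the ranking-function argument -/

lemma rankPos (hε0 : 0 < ε) {C : Set S} {U : S → ℕ}
    (hdec : ∀ s ∈ C, ε ≤ P s {v | U v < U s}) : ∀ s ∈ C, 1 ≤ U s := by
  intro s hs
  by_contra h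
  have hU : U s = 0 := by omega
  have : {v | U v < U s} = (∅ : Set S) := by
    ext v; simp [hU]
  have h2 := hdec s hs
  rw [this] at h2
  simp at h2
  exact absurd h2 hε0.ne'

lemma rank_claimA (hT : IsTrajKernel P T) {ε : ℝ≥0∞} (hε0 : 0 < ε) (hε1 : ε ≤ 1)
    {C : Set S} {U : S → ℕ}
    (hdec : ∀ s ∈ C, ε ≤ P s {v | U v < U s}) :
    ∀ n, ∀ s ∈ C, U s ≤ n → T s (stayN C n) ≤ 1 - ε ^ (U s) := by
  intro n
  induction n with
  | zero =>
    intro s hs hU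
    have := rankPos P hε0 hdec s hs
    omega
  | succ n ih =>
    intro s hs hU
    have hU1 : 1 ≤ U s := rankPos P hε0 hdec s hs
    set a : ℝ≥0∞ := ε ^ (U s - 1) with ha
    have ha1 : a ≤ 1 := pow_le_one' hε1 _
    set Dec : Set S := {v | U v < U s} with hDec
    have hbound : ∀ v, T v (stayN C n) ≤ 1 - a * Dec.indicator (fun _ => 1) v := by
      intro v
      by_cases hv : v ∈ Dec
      · rw [Set.indicator_of_mem hv, mul_one]
        by_cases hvC : v ∈ C
        · have hUv : U v ≤ n := by
            have : U v < U s := hv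
            omega
          calc T v (stayN C n) ≤ 1 - ε ^ (U v) := ih v hvC hUv
            _ ≤ 1 - a := by
              refine tsub_le_tsub_left ?_ 1
              exact pow_le_pow_of_le_one (zero_le) hε1 (by have : U v < U s := hv; omega)
        · rw [T_coord0_zero P T hT (stayN_sub_coord0 C n) hvC]
          exact zero_le
      · rw [Set.indicator_of_notMem hv, mul_zero, tsub_zero]
        exact prob_le_one
    have hstep : T s (stayN C (n + 1)) = ∫⁻ v, T v (stayN C n) ∂(P s) :=
      T_step_eq P T hT s (mStay C (n + 1)) (stayN_pre s hs n)
    have hint : ∫⁻ v, (1 - a * Dec.indicator (fun _ => 1) v) ∂(P s)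
        = 1 - a * P s Dec := by
      have hmeas : Measurable (fun v => a * Dec.indicator (fun _ => (1:ℝ≥0∞)) v) := mfun _
      have hle : (fun v => a * Dec.indicator (fun _ => (1:ℝ≥0∞)) v) ≤ fun _ => 1 := by
        intro v
        by_cases hv : v ∈ Dec
        · simp [Set.indicator_of_mem hv]; exact ha1
        · simp [Set.indicator_of_notMem hv]
      have hfin : ∫⁻ v, a * Dec.indicator (fun _ => (1:ℝ≥0∞)) v ∂(P s) ≠ ⊤ := by
        refine ne_top_of_le_ne_top one_ne_top ?_
        calc ∫⁻ v, a * Dec.indicator (fun _ => (1:ℝ≥0∞)) v ∂(P s)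
            ≤ ∫⁻ _, 1 ∂(P s) := lintegral_mono hle
          _ = 1 := by simp [measure_univ]
      have h4 := lintegral_sub hmeas hfin (Filter.Eventually.of_forall hle)
      simp only [lintegral_const, measure_univ, mul_one] at h4
      rw [h4]
      congr 1
      rw [lintegral_const_mul' _ _ (ne_top_of_le_ne_top one_ne_top ha1),
        lintegral_indicator_const (mS Dec), one_mul]
    calc T s (stayN C (n + 1)) = ∫⁻ v, T v (stayN C n) ∂(P s) := hstep
      _ ≤ ∫⁻ v, (1 - a * Dec.indicator (fun _ => 1) v) ∂(P s) :=
          lintegral_mono fun v => hbound v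
      _ = 1 - a * P s Dec := hint
      _ ≤ 1 - ε ^ (U s) := by
          refine tsub_le_tsub_left ?_ 1
          calc ε ^ (U s) = a * ε := by
                rw [ha, ← pow_succ]
                congr 1
                omega
            _ ≤ a * P s Dec := mul_le_mul_right (hdec s hs) a
      
lemma rank_tail_zero (hT : IsTrajKernel P T) {ε : ℝ≥0∞} (hε0 : 0 < ε) (hε1 : ε ≤ 1)
    {C : Set S} {U : S → ℕ} {N : ℕ}
    (hdec : ∀ s ∈ C, ε ≤ P s {v | U v < U s})
    (hN : ∀ s ∈ C, U s ≤ N) :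
    ∀ n₀ s, T s (tailEv C n₀) = 0 := by
  set δ : ℝ≥0∞ := 1 - ε ^ N with hδ
  have hδ1 : δ < 1 := ENNReal.sub_lt_self one_ne_top one_ne_zero (pow_ne_zero N hε0.ne')
  -- Claim B
  have claimB : ∀ n s, T s (stayN C (n + N)) ≤ δ * T s (stayN C n) := by
    intro n
    induction n with
    | zero =>
      intro s
      by_cases hs : s ∈ C
      · have h1 : T s (stayN C (0 + N)) ≤ 1 - ε ^ (U s) := by
          rw [zero_add]
          exact rank_claimA P T hT hε0 hε1 hdec N s hs (hN s hs)
        have h2 : stayN C 0 = {ω : ℕ → S | ω 0 ∈ C} := by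
          ext ω
          simp only [stayN, mem_setOf_eq]
          constructor
          · intro h; exact h 0 le_rfl
          · intro h m hm; interval_cases m; exact h
        have h3 : T s (stayN C 0) = 1 := by rw [h2]; exact T_coord0_one P T hT hs
        rw [h3, mul_one]
        refine le_trans h1 (tsub_le_tsub_left ?_ 1)
        exact pow_le_pow_of_le_one (zero_le) hε1 (hN s hs)
      · rw [T_coord0_zero P T hT (stayN_sub_coord0 C (0 + N)) hs]
        exact zero_le
    | succ n ih =>
      intro s
      by_cases hs : s ∈ C
      · have e1 : n + 1 + N = (n + N) + 1 := by omega
        rw [e1]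
        rw [T_step_eq P T hT s (mStay C ((n + N) + 1)) (stayN_pre s hs (n + N))]
        rw [T_step_eq P T hT s (mStay C (n + 1)) (stayN_pre s hs n)]
        rw [← lintegral_const_mul' _ _ (ne_top_of_le_ne_top one_ne_top hδ1.le)]
        exact lintegral_mono fun v => ih v
      · rw [T_coord0_zero P T hT (stayN_sub_coord0 C (n + 1 + N)) hs]
        exact zero_le
  -- Claim C
  have claimC : ∀ m s, T s (stayN C (m * N)) ≤ δ ^ m := by
    intro m
    induction m with
    | zero => intro s; simpa using prob_le_one
    | succ m ih =>
      intro s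
      have e1 : (m + 1) * N = m * N + N := by ring
      rw [e1]
      calc T s (stayN C (m * N + N)) ≤ δ * T s (stayN C (m * N)) := claimB (m * N) s
        _ ≤ δ * δ ^ m := mul_le_mul_right (ih s) δ
        _ = δ ^ (m + 1) := (pow_succ' δ m).symm
  -- tail at 0
  have base : ∀ s, T s (tailEv C 0) = 0 := by
    intro s
    have hle : ∀ m, T s (tailEv C 0) ≤ δ ^ m := by
      intro m
      refine le_trans (measure_mono ?_) (claimC m s)
      intro ω hω j _
      exact hω j (Nat.zero_le j)
    have htend := ENNReal.tendsto_pow_atTop_nhds_zero_of_lt_one hδ1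
    have := ge_of_tendsto htend (Filter.Eventually.of_forall hle)
    simpa using this
  intro n₀
  induction n₀ with
  | zero => exact base
  | succ n ih =>
    intro s
    rw [T_step_eq P T hT s (mTail C (n + 1)) (tailEv_pre s C n)]
    simp [ih]

end
/-- shift a trajectory by `t` steps -/
def shiftBy {S : Type*} (t : ℕ) (ω : ℕ → S) : ℕ → S := fun j => ω (t + j)

section
set_option linter.unusedSectionVars false
set_option maxHeartbeats 1000000
variable {S : Type*} [MeasurableSpace S] [DiscreteMeasurableSpace S] [Countable S]

lemma shiftBy_zero (ω : ℕ → S) : shiftBy 0 ω = ω := funext fun j => by simp [shiftBy]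

lemma shiftBy_shiftBy (t u : ℕ) (ω : ℕ → S) :
    shiftBy u (shiftBy t ω) = shiftBy (t + u) ω :=
  funext fun j => by simp [shiftBy, Nat.add_assoc]

lemma shiftBy_consTraj (s : S) (ω : ℕ → S) (u : ℕ) :
    shiftBy (u + 1) (consTraj s ω) = shiftBy u ω := by
  funext j
  have h : u + 1 + j = (u + j) + 1 := by omega
  simp only [shiftBy, h]
  rfl

lemma measurable_shiftBy (t : ℕ) : Measurable (shiftBy t : (ℕ → S) → (ℕ → S)) :=
  measurable_pi_lambda _ fun j => measurable_pi_apply (t + j)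

lemma mInf (C : Set S) : MeasurableSet (infVisits C) := by
  have : infVisits C = ⋂ n, ⋃ m, ⋃ (_ : n ≤ m), {ω : ℕ → S | ω m ∈ C} := by
    ext ω; simp [infVisits]
  rw [this]
  exact MeasurableSet.iInter fun n => MeasurableSet.iUnion fun m =>
    MeasurableSet.iUnion fun _ => mcoord m _

/-- reach `A` (first hit) then the event `X` with remaining horizon -/
def rax (A : Set S) (X : ℕ → Set (ℕ → S)) (n : ℕ) : Set (ℕ → S) :=
  {ω | ∃ u ≤ n, (∀ j < u, ω j ∉ A) ∧ ω u ∈ A ∧ shiftBy u ω ∈ X (n - u)}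

/-- reach `A` at a positive (first positive hit) time then event `X` -/
def raxpos (A : Set S) (X : ℕ → Set (ℕ → S)) (n : ℕ) : Set (ℕ → S) :=
  {ω | ∃ u, 1 ≤ u ∧ u ≤ n ∧ (∀ j, 1 ≤ j → j < u → ω j ∉ A) ∧ ω u ∈ A ∧
    shiftBy u ω ∈ X (n - u)}

/-- `m` rounds of (first `J`-visit, then positive first `A`-visit) within horizon `n` -/
def patH (J A : Set S) : ℕ → ℕ → Set (ℕ → S)
  | 0, _ => Set.univ
  | m + 1, n =>
    {ω | ∃ t ≤ n, (∀ j < t, ω j ∉ J) ∧ ω t ∈ J ∧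
      shiftBy t ω ∈ raxpos A (patH J A m) (n - t)}

lemma mRax {A : Set S} {X : ℕ → Set (ℕ → S)} (hX : ∀ k, MeasurableSet (X k)) (n : ℕ) :
    MeasurableSet (rax A X n) := by
  have : rax A X n = ⋃ u ≤ n,
      ((⋂ j < u, {ω : ℕ → S | ω j ∈ Aᶜ}) ∩ {ω : ℕ → S | ω u ∈ A} ∩
        shiftBy u ⁻¹' X (n - u)) := by
    ext ω
    simp only [rax, mem_setOf_eq, mem_iUnion, mem_inter_iff, mem_iInter, mem_preimage,
      mem_compl_iff]
    constructor
    · rintro ⟨u, hu, h1, h2, h3⟩; exact ⟨u, hu, ⟨h1, h2⟩, h3⟩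
    · rintro ⟨u, hu, ⟨h1, h2⟩, h3⟩; exact ⟨u, hu, h1, h2, h3⟩
  rw [this]
  exact MeasurableSet.biUnion (to_countable _) fun u _ =>
    (((MeasurableSet.biInter (to_countable _) fun j _ => mcoord j _).inter
      (mcoord u _)).inter ((measurable_shiftBy u) (hX (n - u))))

lemma mRaxpos {A : Set S} {X : ℕ → Set (ℕ → S)} (hX : ∀ k, MeasurableSet (X k)) (n : ℕ) :
    MeasurableSet (raxpos A X n) := by
  have : raxpos A X n = ⋃ u, ⋃ (_ : 1 ≤ u ∧ u ≤ n),
      ((⋂ j, ⋂ (_ : 1 ≤ j ∧ j < u), {ω : ℕ → S | ω j ∈ Aᶜ}) ∩ {ω : ℕ → S | ω u ∈ A} ∩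
        shiftBy u ⁻¹' X (n - u)) := by
    ext ω
    simp only [raxpos, mem_setOf_eq, mem_iUnion, mem_inter_iff, mem_iInter, mem_preimage,
      mem_compl_iff]
    constructor
    · rintro ⟨u, hu1, hu2, h1, h2, h3⟩
      exact ⟨u, ⟨hu1, hu2⟩, ⟨fun j hj => h1 j hj.1 hj.2, h2⟩, h3⟩
    · rintro ⟨u, ⟨hu1, hu2⟩, ⟨h1, h2⟩, h3⟩
      exact ⟨u, hu1, hu2, fun j hj1 hj2 => h1 j ⟨hj1, hj2⟩, h2, h3⟩
  rw [this]
  exact MeasurableSet.iUnion fun u => MeasurableSet.iUnion fun _ =>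
    (((MeasurableSet.iInter fun j => MeasurableSet.iInter fun _ => mcoord j _).inter
      (mcoord u _)).inter ((measurable_shiftBy u) (hX (n - u))))

lemma mPatH (J A : Set S) (m n : ℕ) : MeasurableSet (patH J A m n) := by
  induction m generalizing n with
  | zero => exact MeasurableSet.univ
  | succ m ih =>
    have : patH J A (m + 1) n = ⋃ t ≤ n,
        ((⋂ j < t, {ω : ℕ → S | ω j ∈ Jᶜ}) ∩ {ω : ℕ → S | ω t ∈ J} ∩
          shiftBy t ⁻¹' raxpos A (patH J A m) (n - t)) := by
      ext ω
      simp only [patH, mem_setOf_eq, mem_iUnion, mem_inter_iff, mem_iInter, mem_preimage,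
        mem_compl_iff]
      constructor
      · rintro ⟨t, ht, h1, h2, h3⟩; exact ⟨t, ht, ⟨h1, h2⟩, h3⟩
      · rintro ⟨t, ht, ⟨h1, h2⟩, h3⟩; exact ⟨t, ht, h1, h2, h3⟩
    rw [this]
    exact MeasurableSet.biUnion (to_countable _) fun t _ =>
      (((MeasurableSet.biInter (to_countable _) fun j _ => mcoord j _).inter
        (mcoord t _)).inter ((measurable_shiftBy t) (mRaxpos (fun k => ih k) (n - t))))

lemma raxpos_zero (A : Set S) (X : ℕ → Set (ℕ → S)) : raxpos A X 0 = ∅ := by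
  ext ω
  simp only [raxpos, mem_setOf_eq, mem_empty_iff_false, iff_false]
  rintro ⟨u, h1, h2, _⟩
  omega

lemma patH_succ_zero (J A : Set S) (m : ℕ) : patH J A (m + 1) 0 = ∅ := by
  ext ω
  simp only [patH, mem_setOf_eq, mem_empty_iff_false, iff_false]
  rintro ⟨t, ht, _, _, hr⟩
  interval_cases t
  rw [raxpos_zero] at hr
  exact hr

/-- preimage of raxpos under cons -/
lemma raxpos_pre (s : S) (A : Set S) (X : ℕ → Set (ℕ → S)) (n : ℕ) :
    consTraj s ⁻¹' raxpos A X (n + 1) = rax A X n := by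
  ext ω
  simp only [mem_preimage, raxpos, rax, mem_setOf_eq]
  constructor
  · rintro ⟨u, hu1, hu2, hmin, hA, hX⟩
    cases u with
    | zero => omega
    | succ u' =>
      refine ⟨u', by omega, fun j hj => hmin (j + 1) (by omega) (by omega), hA, ?_⟩
      rw [shiftBy_consTraj] at hX
      have : n + 1 - (u' + 1) = n - u' := by omega
      rwa [this] at hX
  · rintro ⟨u, hu, hmin, hA, hX⟩
    refine ⟨u + 1, by omega, by omega, ?_, hA, ?_⟩
    · intro j hj1 hj2
      cases j with
      | zero => omega
      | succ j' => exact hmin j' (by omega)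
    · rw [shiftBy_consTraj]
      have : n + 1 - (u + 1) = n - u := by omega
      rwa [this]

/-- preimage of rax under cons, case `s ∉ A` -/
lemma rax_pre_notA {s : S} {A : Set S} (hs : s ∉ A) (X : ℕ → Set (ℕ → S)) (n : ℕ) :
    consTraj s ⁻¹' rax A X (n + 1) = rax A X n := by
  ext ω
  simp only [mem_preimage, rax, mem_setOf_eq]
  constructor
  · rintro ⟨u, hu, hmin, hA, hX⟩
    cases u with
    | zero => exact absurd hA hs
    | succ u' =>
      refine ⟨u', by omega, fun j hj => hmin (j + 1) (by omega), hA, ?_⟩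
      rw [shiftBy_consTraj] at hX
      have : n + 1 - (u' + 1) = n - u' := by omega
      rwa [this] at hX
  · rintro ⟨u, hu, hmin, hA, hX⟩
    refine ⟨u + 1, by omega, ?_, hA, ?_⟩
    · intro j hj
      cases j with
      | zero => exact hs
      | succ j' => exact hmin j' (by omega)
    · rw [shiftBy_consTraj]
      have : n + 1 - (u + 1) = n - u := by omega
      rwa [this]

/-- preimage of rax under cons, case `s ∈ A` -/
lemma rax_pre_A {s : S} {A : Set S} (hs : s ∈ A) (X : ℕ → Set (ℕ → S)) (n : ℕ) :
    consTraj s ⁻¹' rax A X (n + 1) = consTraj s ⁻¹' X (n + 1) := by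
  ext ω
  simp only [mem_preimage, rax, mem_setOf_eq]
  constructor
  · rintro ⟨u, hu, hmin, hA, hX⟩
    cases u with
    | zero =>
      rw [shiftBy_zero] at hX
      simpa using hX
    | succ u' => exact absurd hs (hmin 0 (by omega))
  · intro hX
    refine ⟨0, by omega, by omega, hs, ?_⟩
    rw [shiftBy_zero]
    simpa using hX

/-- preimage of patH under cons, case `s ∈ J` -/
lemma patH_pre_J {s : S} {J A : Set S} (hs : s ∈ J) (m n : ℕ) :
    consTraj s ⁻¹' patH J A (m + 1) (n + 1) = rax A (patH J A m) n := by
  rw [← raxpos_pre s A (patH J A m) n]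
  ext ω
  simp only [mem_preimage, patH, mem_setOf_eq]
  constructor
  · rintro ⟨t, ht, hmin, hJ', hX⟩
    cases t with
    | zero =>
      rw [shiftBy_zero] at hX
      simpa using hX
    | succ t' => exact absurd hs (hmin 0 (by omega))
  · intro hX
    refine ⟨0, by omega, by omega, hs, ?_⟩
    rw [shiftBy_zero]
    simpa using hX

/-- preimage of patH under cons, case `s ∉ J` -/
lemma patH_pre_notJ {s : S} {J A : Set S} (hs : s ∉ J) (m n : ℕ) :
    consTraj s ⁻¹' patH J A (m + 1) (n + 1) = patH J A (m + 1) n := by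
  ext ω
  simp only [mem_preimage, patH, mem_setOf_eq]
  constructor
  · rintro ⟨t, ht, hmin, hJ', hX⟩
    cases t with
    | zero => exact absurd hJ' hs
    | succ t' =>
      refine ⟨t', by omega, fun j hj => hmin (j + 1) (by omega), hJ', ?_⟩
      rw [shiftBy_consTraj] at hX
      have : n + 1 - (t' + 1) = n - t' := by omega
      rwa [this] at hX
  · rintro ⟨t, ht, hmin, hJ', hX⟩
    refine ⟨t + 1, by omega, ?_, hJ', ?_⟩
    · intro j hj
      cases j with
      | zero => exact hs
      | succ j' => exact hmin j' (by omega)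
    · rw [shiftBy_consTraj]
      have : n + 1 - (t + 1) = n - t := by omega
      rwa [this]

end
section
set_option linter.unusedSectionVars false
set_option maxHeartbeats 1000000
variable {S : Type*} [MeasurableSpace S] [DiscreteMeasurableSpace S] [Countable S]
variable (P : Kernel S S) (T : Kernel S (ℕ → S)) [IsMarkovKernel P] [IsMarkovKernel T]

lemma patH_mono (J A : Set S) (m : ℕ) :
    ∀ {n n' : ℕ}, n ≤ n' → patH J A m n ⊆ patH J A m n' := by
  induction m with
  | zero => intro n n' _ ω _; trivial
  | succ m ih =>
    rintro n n' hnn ω ⟨t, ht, hmin, hJ', ⟨u, hu1, hu2, hamin, hA, hX⟩⟩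
    refine ⟨t, by omega, hmin, hJ', ⟨u, hu1, by omega, hamin, hA, ?_⟩⟩
    exact ih (by omega) hX

lemma patQ (hT : IsTrajKernel P T) {J A : Set S} {V : S → ℝ} {β : ℝ≥0∞}
    (hJA : ∀ s ∈ J, s ∉ A)
    (hVsup : ∀ s ∉ A, ∫⁻ u, ENNReal.ofReal (V u) ∂(P s) ≤ ENNReal.ofReal (V s))
    (hVA : ∀ s ∈ A, 1 ≤ V s)
    (hJV : ∀ s ∈ J, ENNReal.ofReal (V s) ≤ β) :
    ∀ m n s, T s (patH J A m n) ≤ β ^ m := by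
  intro m
  induction m with
  | zero => intro n s; simpa using prob_le_one
  | succ m ihQ =>
    have hone : ∀ s ∈ A, β ^ m ≤ ENNReal.ofReal (V s) * β ^ m := by
      intro s hs
      nth_rewrite 1 [← one_mul (β ^ m)]
      exact mul_le_mul_left (ENNReal.one_le_ofReal.2 (hVA s hs)) _
    have R : ∀ n s, T s (rax A (patH J A m) n) ≤ ENNReal.ofReal (V s) * β ^ m := by
      intro n
      induction n with
      | zero =>
        intro s
        by_cases hs : s ∈ A
        · have hsub : rax A (patH J A m) 0 ⊆ patH J A m 0 := by
            rintro ω ⟨u, hu, hmin, hA, hX⟩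
            interval_cases u
            rwa [shiftBy_zero] at hX
          calc T s (rax A (patH J A m) 0) ≤ T s (patH J A m 0) := measure_mono hsub
            _ ≤ β ^ m := ihQ 0 s
            _ ≤ ENNReal.ofReal (V s) * β ^ m := hone s hs
        · have hsub : rax A (patH J A m) 0 ⊆ {ω : ℕ → S | ω 0 ∈ A} := by
            rintro ω ⟨u, hu, hmin, hA, hX⟩
            interval_cases u
            exact hA
          rw [T_coord0_zero P T hT hsub hs]
          exact zero_le
      | succ n ihn =>
        intro s
        by_cases hs : s ∈ A
        · rw [T_step_eq P T hT s (mRax (fun k => mPatH J A m k) (n + 1)) (rax_pre_A hs _ n),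
            ← T_step P T hT s (mPatH J A m (n + 1))]
          exact le_trans (ihQ (n + 1) s) (hone s hs)
        · rw [T_step_eq P T hT s (mRax (fun k => mPatH J A m k) (n + 1)) (rax_pre_notA hs _ n)]
          calc ∫⁻ v, T v (rax A (patH J A m) n) ∂(P s)
              ≤ ∫⁻ v, ENNReal.ofReal (V v) * β ^ m ∂(P s) := lintegral_mono fun v => ihn v
            _ = (∫⁻ v, ENNReal.ofReal (V v) ∂(P s)) * β ^ m := lintegral_mul_const _ (mfun _)
            _ ≤ ENNReal.ofReal (V s) * β ^ m := mul_le_mul_left (hVsup s hs) _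
    intro n
    induction n with
    | zero =>
      intro s
      rw [patH_succ_zero]
      simp
    | succ n ihn =>
      intro s
      by_cases hs : s ∈ J
      · rw [T_step_eq P T hT s (mPatH J A (m + 1) (n + 1)) (patH_pre_J hs m n)]
        calc ∫⁻ v, T v (rax A (patH J A m) n) ∂(P s)
            ≤ ∫⁻ v, ENNReal.ofReal (V v) * β ^ m ∂(P s) := lintegral_mono fun v => R n v
          _ = (∫⁻ v, ENNReal.ofReal (V v) ∂(P s)) * β ^ m := lintegral_mul_const _ (mfun _)
          _ ≤ ENNReal.ofReal (V s) * β ^ m := mul_le_mul_left (hVsup s (hJA s hs)) _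
          _ ≤ β * β ^ m := mul_le_mul_left (hJV s hs) _
          _ = β ^ (m + 1) := (pow_succ' β m).symm
      · rw [T_step_eq P T hT s (mPatH J A (m + 1) (n + 1)) (patH_pre_notJ hs m n)]
        calc ∫⁻ v, T v (patH J A (m + 1) n) ∂(P s)
            ≤ ∫⁻ _, β ^ (m + 1) ∂(P s) := lintegral_mono fun v => ihn v
          _ = β ^ (m + 1) := by simp [measure_univ]

lemma infVisits_shiftBy {C : Set S} {ω : ℕ → S} (h : ω ∈ infVisits C) (k : ℕ) :
    shiftBy k ω ∈ infVisits C := by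
  intro n
  obtain ⟨m, hm, hmC⟩ := h (k + n)
  refine ⟨m - k, by omega, ?_⟩
  have : k + (m - k) = m := by omega
  simp only [shiftBy, this]
  exact hmC

lemma pat_exists {J A : Set S} :
    ∀ (m : ℕ) (ω : ℕ → S), ω ∈ infVisits J → ω ∈ infVisits A →
      ∃ n, ω ∈ patH J A m n := by
  intro m
  induction m with
  | zero => intro ω _ _; exact ⟨0, trivial⟩
  | succ m ih =>
    intro ω hJω hAω
    classical
    obtain ⟨t0, _, ht0⟩ := hJω 0
    have hJex : ∃ t, ω t ∈ J := ⟨t0, ht0⟩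
    set t := Nat.find hJex with htdef
    have htJ : ω t ∈ J := Nat.find_spec hJex
    have htmin : ∀ j < t, ω j ∉ J := fun j hj => Nat.find_min hJex hj
    obtain ⟨u', hu'1, hu'2⟩ := hAω (t + 1)
    have hAex : ∃ u, 1 ≤ u ∧ ω (t + u) ∈ A := by
      refine ⟨u' - t, by omega, ?_⟩
      have : t + (u' - t) = u' := by omega
      rw [this]
      exact hu'2
    set u := Nat.find hAex with hudef
    obtain ⟨hu1, huA⟩ := Nat.find_spec hAex
    have humin : ∀ j, 1 ≤ j → j < u → ω (t + j) ∉ A := by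
      intro j hj1 hj2 hjA
      exact Nat.find_min hAex hj2 ⟨hj1, hjA⟩
    have hsufJ : shiftBy (t + u) ω ∈ infVisits J := infVisits_shiftBy hJω (t + u)
    have hsufA : shiftBy (t + u) ω ∈ infVisits A := infVisits_shiftBy hAω (t + u)
    obtain ⟨n'', hn''⟩ := ih (shiftBy (t + u) ω) hsufJ hsufA
    refine ⟨t + u + n'', ⟨t, by omega, htmin, htJ, ⟨u, hu1, ?_, ?_, ?_, ?_⟩⟩⟩
    · have : t + u + n'' - t = u + n'' := by omega
      omega
    · intro j hj1 hj2
      exact humin j hj1 hj2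
    · exact huA
    · rw [shiftBy_shiftBy]
      have h1 : t + u + n'' - t = u + n'' := by omega
      have h2 : u + n'' - u = n'' := by omega
      rw [h1, h2]
      exact hn''

lemma partI_zero (hT : IsTrajKernel P T) {J A : Set S} {V : S → ℝ} {β : ℝ≥0∞}
    (hβ : β < 1)
    (hJA : ∀ s ∈ J, s ∉ A)
    (hVsup : ∀ s ∉ A, ∫⁻ u, ENNReal.ofReal (V u) ∂(P s) ≤ ENNReal.ofReal (V s))
    (hVA : ∀ s ∈ A, 1 ≤ V s)
    (hJV : ∀ s ∈ J, ENNReal.ofReal (V s) ≤ β) :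
    ∀ s, T s (infVisits J ∩ infVisits A) = 0 := by
  intro s
  have hle : ∀ m, T s (infVisits J ∩ infVisits A) ≤ β ^ m := by
    intro m
    have hsub : infVisits J ∩ infVisits A ⊆ ⋃ n, patH J A m n := by
      rintro ω ⟨h1, h2⟩
      obtain ⟨n, hn⟩ := pat_exists m ω h1 h2
      exact mem_iUnion.2 ⟨n, hn⟩
    have hmono : Monotone (patH J A m) := fun n n' h => patH_mono J A m h
    calc T s (infVisits J ∩ infVisits A) ≤ T s (⋃ n, patH J A m n) := measure_mono hsub
      _ = ⨆ n, T s (patH J A m n) := hmono.directed_le.measure_iUnion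
      _ ≤ β ^ m := iSup_le fun n => patQ P T hT hJA hVsup hVA hJV m n s
  have htend := ENNReal.tendsto_pow_atTop_nhds_zero_of_lt_one hβ
  have := ge_of_tendsto htend (Filter.Eventually.of_forall hle)
  simpa using this

end

section
set_option linter.unusedSectionVars false
set_option maxHeartbeats 1000000
variable {S : Type*} [MeasurableSpace S] [DiscreteMeasurableSpace S] [Countable S]
variable (P : Kernel S S) (T : Kernel S (ℕ → S)) [IsMarkovKernel P] [IsMarkovKernel T]

lemma mFin (C : Set S) : MeasurableSet (finVisits C) := by
  have : finVisits C = ⋃ n, ⋂ m, ⋂ (_ : n ≤ m), {ω : ℕ → S | ω m ∈ Cᶜ} := by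
    ext ω; simp [finVisits]
  rw [this]
  exact MeasurableSet.iUnion fun n => MeasurableSet.iInter fun m =>
    MeasurableSet.iInter fun _ => mcoord m _

lemma mInvEv (I : Set S) : MeasurableSet (invEvent I) := by
  have : invEvent I = ⋂ n, {ω : ℕ → S | ω n ∈ I} := by ext ω; simp [invEvent]
  rw [this]
  exact MeasurableSet.iInter fun n => mcoord n _

lemma compl_finVisits (C : Set S) : (finVisits C)ᶜ = infVisits C := by
  ext ω
  simp only [finVisits, infVisits, mem_compl_iff, mem_setOf_eq, not_exists, not_forall]
  constructor
  · intro h n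
    obtain ⟨m, hm1, hm2⟩ := h n
    exact ⟨m, hm1, not_not.mp hm2⟩
  · intro h n
    obtain ⟨m, hm1, hm2⟩ := h n
    exact ⟨m, hm1, not_not_intro hm2⟩


/-- finite-horizon escape event -/
def escN (I : Set S) (n : ℕ) : Set (ℕ → S) := {ω | ∃ m ≤ n, ω m ∉ I}

lemma mEsc (I : Set S) (n : ℕ) : MeasurableSet (escN I n) := by
  have : escN I n = ⋃ m ≤ n, {ω : ℕ → S | ω m ∈ Iᶜ} := by ext ω; simp [escN]
  rw [this]
  exact MeasurableSet.biUnion (to_countable _) fun m _ => mcoord m _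

lemma escape_bound (hT : IsTrajKernel P T) {I : Set S} {V₀ : S → ℝ}
    (hinv : ∀ s ∈ I, ∫⁻ u, ENNReal.ofReal (V₀ u) ∂(P s) ≤ ENNReal.ofReal (V₀ s))
    (hout : ∀ s ∉ I, 1 ≤ V₀ s) :
    ∀ n s, T s (escN I n) ≤ ENNReal.ofReal (V₀ s) := by
  intro n
  induction n with
  | zero =>
    intro s
    by_cases hs : s ∈ I
    · have : escN I 0 ⊆ {ω : ℕ → S | ω 0 ∈ Iᶜ} := by
        rintro ω ⟨m, hm, h⟩
        interval_cases m
        exact h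
      rw [T_coord0_zero P T hT this (by simpa using hs)]
      exact zero_le
    · calc T s (escN I 0) ≤ 1 := prob_le_one
        _ ≤ ENNReal.ofReal (V₀ s) := ENNReal.one_le_ofReal.2 (hout s hs)
  | succ n ih =>
    intro s
    by_cases hs : s ∈ I
    · have hpre : consTraj s ⁻¹' escN I (n + 1) = escN I n := by
        ext ω
        constructor
        · rintro ⟨m, hm, h⟩
          cases m with
          | zero => exact absurd hs h
          | succ m' => exact ⟨m', by omega, h⟩
        · rintro ⟨m, hm, h⟩
          exact ⟨m + 1, by omega, h⟩
      rw [T_step_eq P T hT s (mEsc I (n + 1)) hpre]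
      calc ∫⁻ v, T v (escN I n) ∂(P s) ≤ ∫⁻ v, ENNReal.ofReal (V₀ v) ∂(P s) :=
            lintegral_mono fun v => ih v
        _ ≤ ENNReal.ofReal (V₀ s) := hinv s hs
    · calc T s (escN I (n + 1)) ≤ 1 := prob_le_one
        _ ≤ ENNReal.ofReal (V₀ s) := ENNReal.one_le_ofReal.2 (hout s hs)

lemma escape_bound_inf (hT : IsTrajKernel P T) {I : Set S} {V₀ : S → ℝ}
    (hinv : ∀ s ∈ I, ∫⁻ u, ENNReal.ofReal (V₀ u) ∂(P s) ≤ ENNReal.ofReal (V₀ s))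
    (hout : ∀ s ∉ I, 1 ≤ V₀ s) (s : S) :
    T s (invEvent I)ᶜ ≤ ENNReal.ofReal (V₀ s) := by
  have hset : (invEvent I)ᶜ = ⋃ n, escN I n := by
    ext ω
    simp only [invEvent, mem_compl_iff, mem_setOf_eq, not_forall, mem_iUnion, escN]
    constructor
    · rintro ⟨n, hn⟩; exact ⟨n, n, le_rfl, hn⟩
    · rintro ⟨n, m, _, hm⟩; exact ⟨m, hm⟩
  have hmono : Monotone (escN I) := fun n n' h ω => by
    rintro ⟨m, hm, hω⟩; exact ⟨m, le_trans hm h, hω⟩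
  rw [hset, hmono.directed_le.measure_iUnion]
  exact iSup_le fun n => escape_bound P T hT hinv hout n s

lemma kappa_apply (μ : Measure S) {E : Set (ℕ → S)} (hE : MeasurableSet E) :
    μ.bind (fun s => (T s : Measure (ℕ → S))) E = ∫⁻ s, T s E ∂μ :=
  Measure.bind_apply hE T.measurable.aemeasurable

lemma kappa_null (μ : Measure S) {E : Set (ℕ → S)} (hE : MeasurableSet E)
    (h : ∀ s, T s E = 0) : μ.bind (fun s => (T s : Measure (ℕ → S))) E = 0 := by
  rw [kappa_apply T μ hE]
  simp [h]


end

/-- soundness of Proof Rule #1 for quantitative reactivity on countable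
state spaces. -/
theorem proof_rule_one_sound
    {S : Type*} [MeasurableSpace S] [DiscreteMeasurableSpace S] [Countable S]
    (P : Kernel S S) [IsMarkovKernel P]
    (T : Kernel S (ℕ → S)) [IsMarkovKernel T] (hT : IsTrajKernel P T)
    (μ : Measure S) [IsProbabilityMeasure μ]
    (k : ℕ) (A B : Fin k → Set S)
    (I : Set S) (V₀ : S → ℝ) (J : Fin k → Set S)
    (V W : Fin k → S → ℝ) (U : Fin k → S → ℕ)
    (hV₀nonneg : ∀ s, 0 ≤ V₀ s)
    (hVnonneg : ∀ i s, 0 ≤ V i s) (hWnonneg : ∀ i s, 0 ≤ W i s)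
    (hJ : ∀ i, J i ⊆ I \ A i)
    (ha : ∀ i, ∀ s ∉ A i,
      ∫⁻ u, ENNReal.ofReal (V i u) ∂(P s) ≤ ENNReal.ofReal (V i s))
    (hb : ∀ i, ∀ s ∈ A i, 1 ≤ V i s)
    (hc : ∀ i, ∃ γ : ℝ, 0 < γ ∧ ∀ s ∈ J i, V i s ≤ 1 - γ)
    (hd : ∀ i, ∀ s ∈ I \ (B i ∪ J i),
      ∫⁻ u, ENNReal.ofReal (W i u) ∂(P s) ≤ ENNReal.ofReal (W i s))
    (he : ∀ i, ∀ s ∈ I \ (B i ∪ J i), 0 < W i s)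
    (hf : ∀ i, ∀ s ∈ I ∩ (B i ∪ J i), W i s = 0 ∧ U i s = 0)
    (hg : ∀ i, ∀ r : ℝ, 0 ≤ r → ∃ ε : ℝ≥0∞, 0 < ε ∧
      ∀ s ∈ I \ (B i ∪ J i), W i s ≤ r → ε ≤ P s {s' | U i s' < U i s})
    (hh : ∀ i, ∀ r : ℝ, 0 ≤ r → ∃ N : ℕ, ∀ s ∈ I, W i s ≤ r → U i s ≤ N)
    (hinv : ∀ s ∈ I,
      ∫⁻ u, ENNReal.ofReal (V₀ u) ∂(P s) ≤ ENNReal.ofReal (V₀ s))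
    (hout : ∀ s ∉ I, 1 ≤ V₀ s) :
    1 - ∫⁻ s, ENNReal.ofReal (V₀ s) ∂μ ≤
      (μ.bind (fun s => (T s : Measure (ℕ → S))))
        (⋂ i, finVisits (A i) ∪ infVisits (B i)) := by
  classical
  set κ := μ.bind (fun s => (T s : Measure (ℕ → S))) with hκdef
  set Good := ⋂ i, finVisits (A i) ∪ infVisits (B i) with hGooddef
  have mGood : MeasurableSet Good :=
    MeasurableSet.iInter fun i => (mFin (A i)).union (mInf (B i))
  -- per-index null sets
  have hZero : ∀ i : Fin k, κ (invEvent I ∩ (infVisits (A i) ∩ finVisits (B i))) = 0 := by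
    intro i
    obtain ⟨γ, hγ0, hγJ⟩ := hc i
    set D : Set S := I \ (B i ∪ J i) with hDdef
    have hI1 : ∀ s, T s (infVisits (J i) ∩ infVisits (A i)) = 0 := by
      refine partI_zero P T hT (β := ENNReal.ofReal (1 - γ)) ?_ ?_ (ha i) (hb i) ?_
      · exact ENNReal.ofReal_lt_one.2 (by linarith)
      · exact fun s hs => (hJ i hs).2
      · exact fun s hs => ENNReal.ofReal_le_ofReal (hγJ s hs)
    have hTail : ∀ (r : ℕ) (n₀ : ℕ) (s : S),
        T s (tailEv {v | v ∈ D ∧ W i v ≤ (r : ℝ)} n₀) = 0 := by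
      intro r
      obtain ⟨ε₀, hε₀, hεdec⟩ := hg i (r : ℝ) (Nat.cast_nonneg r)
      obtain ⟨N, hN⟩ := hh i (r : ℝ) (Nat.cast_nonneg r)
      exact rank_tail_zero P T hT (ε := min ε₀ 1) (lt_min hε₀ zero_lt_one)
        (min_le_right _ _) (U := U i) (N := N)
        (fun s hs => le_trans (min_le_left _ _) (hεdec s hs.1 hs.2))
        (fun s hs => hN s hs.1.1 hs.2)
    have hUnb : ∀ (n₀ : ℕ) (s : S), T s (unbEv D (W i) n₀) = 0 :=
      unb_zero P T hT (hd i)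
    have hcov : invEvent I ∩ (infVisits (A i) ∩ finVisits (B i)) ⊆
        (infVisits (J i) ∩ infVisits (A i)) ∪
        ⋃ n₀ : ℕ, ((⋃ r : ℕ, tailEv {v | v ∈ D ∧ W i v ≤ (r : ℝ)} n₀) ∪
          unbEv D (W i) n₀) := by
      rintro ω ⟨hinv', hiA, hfB⟩
      by_cases hiJ : ω ∈ infVisits (J i)
      · exact Or.inl ⟨hiJ, hiA⟩
      · right
        simp only [infVisits, mem_setOf_eq, not_forall] at hiJ
        obtain ⟨n₁, hn₁⟩ := hiJ
        push_neg at hn₁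
        obtain ⟨n₂, hn₂⟩ := hfB
        have hDtail : ∀ m, max n₁ n₂ ≤ m → ω m ∈ D := by
          intro m hm
          refine ⟨hinv' m, ?_⟩
          rintro (hB | hJ')
          · exact hn₂ m (le_trans (le_max_right _ _) hm) hB
          · exact hn₁ m (le_trans (le_max_left _ _) hm) hJ'
        refine mem_iUnion.2 ⟨max n₁ n₂, ?_⟩
        by_cases hbd : ∃ r : ℕ, ∀ m, max n₁ n₂ ≤ m → W i (ω m) ≤ (r : ℝ)
        · obtain ⟨r, hr⟩ := hbd
          exact Or.inl (mem_iUnion.2 ⟨r, fun m hm => ⟨hDtail m hm, hr m hm⟩⟩)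
        · push_neg at hbd
          refine Or.inr ⟨hDtail, ?_⟩
          simp only [mem_iInter, mem_setOf_eq]
          intro r
          obtain ⟨m, hm, hmr⟩ := hbd r
          exact ⟨m, hm, hmr⟩
    refine measure_mono_null hcov (measure_union_null ?_ ?_)
    · exact kappa_null T μ ((mInf (J i)).inter (mInf (A i))) hI1
    · refine measure_iUnion_null fun n₀ => measure_union_null ?_ ?_
      · exact measure_iUnion_null fun r => kappa_null T μ (mTail _ n₀) (hTail r n₀)
      · exact kappa_null T μ (mUnb D (W i) n₀) (hUnb n₀)
  rw [tsub_le_iff_right]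
  have huniv : κ univ = 1 := by
    rw [kappa_apply T μ MeasurableSet.univ]
    simp [measure_univ]
  have hsplit : (univ : Set (ℕ → S)) ⊆
      Good ∪ ((invEvent I)ᶜ ∪ (invEvent I ∩ Goodᶜ)) := by
    intro ω _
    by_cases hg' : ω ∈ Good
    · exact Or.inl hg'
    · by_cases hi' : ω ∈ invEvent I
      · exact Or.inr (Or.inr ⟨hi', hg'⟩)
      · exact Or.inr (Or.inl hi')
  have hesc : κ (invEvent I)ᶜ ≤ ∫⁻ s, ENNReal.ofReal (V₀ s) ∂μ := by
    rw [kappa_apply T μ (mInvEv I).compl]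
    exact lintegral_mono fun s => escape_bound_inf P T hT hinv hout s
  have hbad : κ (invEvent I ∩ Goodᶜ) = 0 := by
    refine measure_mono_null ?_ (measure_iUnion_null hZero)
    rintro ω ⟨h1, h2⟩
    have h2' : ∃ i, ω ∉ finVisits (A i) ∪ infVisits (B i) := by
      by_contra hno
      push_neg at hno
      exact h2 (mem_iInter.2 hno)
    obtain ⟨i, hi⟩ := h2'
    have hiA : ω ∈ infVisits (A i) := by
      rw [← compl_finVisits]
      exact fun h => hi (Or.inl h)
    have hiB : ω ∈ finVisits (B i) := by
      by_contra hB
      have : ω ∈ infVisits (B i) := by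
        rw [← compl_finVisits]
        exact hB
      exact hi (Or.inr this)
    exact mem_iUnion.2 ⟨i, h1, hiA, hiB⟩
  calc (1 : ℝ≥0∞) = κ univ := huniv.symm
    _ ≤ κ (Good ∪ ((invEvent I)ᶜ ∪ (invEvent I ∩ Goodᶜ))) := measure_mono hsplit
    _ ≤ κ Good + κ ((invEvent I)ᶜ ∪ (invEvent I ∩ Goodᶜ)) := measure_union_le _ _
    _ ≤ κ Good + (κ (invEvent I)ᶜ + κ (invEvent I ∩ Goodᶜ)) :=
        add_le_add_right (measure_union_le _ _) _
    _ = κ Good + κ (invEvent I)ᶜ := by rw [hbad, add_zero]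
    _ ≤ κ Good + ∫⁻ s, ENNReal.ofReal (V₀ s) ∂μ := add_le_add_right hesc _
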